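/- On any bi-Heyting algebra A, a subset F ⊆ A is a wBIL-deductive filter if and only if it is a lattice filter (contains ⊤, is upward closed, and is closed under meets). -/
import Mathlib


/-- Formulas of the bi-intuitionistic language. -/
inductive Form : Type
  | var : ℕ → Form
  | top : Form
  | bot : Form
  | and : Form → Form → Form
  | or : Form → Form → Form
  | imp : Form → Form → Form
  | excl : Form → Form → Form

/-- Negation `¬φ := φ → ⊥`. -/
def Form.neg (φ : Form) : Form := φ.imp .bot

/-- Co-negation `∼φ := ⊤ ∖ φ`. -/
def Form.wneg (φ : Form) : Form := Form.excl .top φ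

/-- The axioms A1–A14 of the generalized Hilbert calculi for bi-intuitionistic logic. -/
inductive Ax : Form → Prop
  | a1 (φ ψ : Form) : Ax (φ.imp (ψ.imp φ))
  | a2 (φ ψ χ : Form) : Ax ((φ.imp (ψ.imp χ)).imp ((φ.imp ψ).imp (φ.imp χ)))
  | a3 (φ ψ : Form) : Ax (φ.imp (φ.or ψ))
  | a4 (φ ψ : Form) : Ax (ψ.imp (φ.or ψ))
  | a5 (φ ψ χ : Form) : Ax ((φ.imp χ).imp ((ψ.imp χ).imp ((φ.or ψ).imp χ)))
  | a6 (φ ψ : Form) : Ax ((φ.and ψ).imp φ)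
  | a7 (φ ψ : Form) : Ax ((φ.and ψ).imp ψ)
  | a8 (φ ψ χ : Form) : Ax ((χ.imp φ).imp ((χ.imp ψ).imp (χ.imp (φ.and ψ))))
  | a9 (φ : Form) : Ax (Form.bot.imp φ)
  | a10 (φ : Form) : Ax (φ.imp Form.top)
  | a11 (φ ψ : Form) : Ax (φ.imp (ψ.or (φ.excl ψ)))
  | a12 (φ ψ : Form) : Ax ((φ.excl ψ).imp (φ.imp ψ).wneg)
  | a13 (φ ψ χ : Form) : Ax (((φ.excl ψ).excl χ).imp (φ.excl (ψ.or χ)))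
  | a14 (φ ψ : Form) : Ax ((φ.excl ψ).neg.imp (φ.imp ψ))

/-- The strong bi-intuitionistic logic `sBIL`. -/
inductive sprv : Set Form → Form → Prop
  | ax {Γ φ} : Ax φ → sprv Γ φ
  | el {Γ φ} : φ ∈ Γ → sprv Γ φ
  | mp {Γ φ ψ} : sprv Γ (φ.imp ψ) → sprv Γ φ → sprv Γ ψ
  | sdn {Γ φ} : sprv Γ φ → sprv Γ φ.wneg.neg

/-- The weak bi-intuitionistic logic `wBIL`. -/
inductive wprv : Set Form → Form → Prop
  | ax {Γ φ} : Ax φ → wprv Γ φ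
  | el {Γ φ} : φ ∈ Γ → wprv Γ φ
  | mp {Γ φ ψ} : wprv Γ (φ.imp ψ) → wprv Γ φ → wprv Γ ψ
  | wdn {Γ : Set Form} {φ} : wprv ∅ φ → wprv Γ φ.wneg.neg

/-- Interpretation of formulas in a bi-Heyting algebra via a valuation. -/
def interp {α : Type*} [BiheytingAlgebra α] (v : ℕ → α) : Form → α
  | .var p => v p
  | .top => ⊤
  | .bot => ⊥
  | .and φ ψ => interp v φ ⊓ interp v ψ
  | .or φ ψ => interp v φ ⊔ interp v ψ
  | .imp φ ψ => interp v φ ⇨ interp v ψ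
  | .excl φ ψ => interp v φ \ interp v ψ

/-- `F` is a `wBIL`-deductive filter on `α`. -/
def wFilter {α : Type*} [BiheytingAlgebra α] (F : Set α) : Prop :=
  ∀ (Γ : Set Form) (φ : Form) (v : ℕ → α),
    wprv Γ φ → (∀ γ ∈ Γ, interp v γ ∈ F) → interp v φ ∈ F

/-- `F` is a lattice filter on `α`. -/
def latticeFilter {α : Type*} [BiheytingAlgebra α] (F : Set α) : Prop :=
  ⊤ ∈ F ∧ (∀ a b : α, a ∈ F → a ≤ b → b ∈ F) ∧ (∀ a b : α, a ∈ F → b ∈ F → a ⊓ b ∈ F)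

section Aux
variable {α : Type*} [BiheytingAlgebra α]

lemma ax_interp (v : ℕ → α) {φ : Form} (h : Ax φ) : interp v φ = ⊤ := by
  induction h with
  | a1 φ ψ =>
      simp only [interp, himp_eq_top_iff, le_himp_iff]
      exact inf_le_left
  | a2 φ ψ χ =>
      simp only [interp, himp_eq_top_iff, le_himp_iff]
      refine le_trans (le_inf ?_ ?_ :
        _ ≤ (interp v ψ ⇨ interp v χ) ⊓ interp v ψ) himp_inf_le
      · exact (inf_le_inf_right _ inf_le_left).trans himp_inf_le
      · exact (inf_le_inf_right _ inf_le_right).trans himp_inf_le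
  | a3 φ ψ =>
      simp only [interp, himp_eq_top_iff]
      exact le_sup_left
  | a4 φ ψ =>
      simp only [interp, himp_eq_top_iff]
      exact le_sup_right
  | a5 φ ψ χ =>
      simp only [interp, himp_eq_top_iff, le_himp_iff]
      rw [inf_sup_left]
      refine sup_le ?_ ?_
      · exact (inf_le_inf_right _ inf_le_left).trans himp_inf_le
      · exact (inf_le_inf_right _ inf_le_right).trans himp_inf_le
  | a6 φ ψ =>
      simp only [interp, himp_eq_top_iff]
      exact inf_le_left
  | a7 φ ψ =>
      simp only [interp, himp_eq_top_iff]
      exact inf_le_right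
  | a8 φ ψ χ =>
      simp only [interp, himp_eq_top_iff, le_himp_iff]
      refine le_inf ?_ ?_
      · exact (inf_le_inf_right _ inf_le_left).trans himp_inf_le
      · exact (inf_le_inf_right _ inf_le_right).trans himp_inf_le
  | a9 φ =>
      simp only [interp, himp_eq_top_iff]
      exact bot_le
  | a10 φ =>
      simp only [interp, himp_eq_top_iff]
      exact le_top
  | a11 φ ψ =>
      simp only [interp, himp_eq_top_iff]
      exact le_sup_sdiff
  | a12 φ ψ =>
      simp only [interp, Form.wneg, himp_eq_top_iff]
      rw [sdiff_le_iff]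
      calc interp v φ ≤ interp v φ ⊓ ((interp v φ ⇨ interp v ψ) ⊔ ⊤ \ (interp v φ ⇨ interp v ψ)) := by
              rw [sup_sdiff_self, sup_top_eq, inf_top_eq]
        _ = (interp v φ ⊓ (interp v φ ⇨ interp v ψ)) ⊔
              (interp v φ ⊓ ⊤ \ (interp v φ ⇨ interp v ψ)) := inf_sup_left ..
        _ ≤ interp v ψ ⊔ ⊤ \ (interp v φ ⇨ interp v ψ) := sup_le_sup inf_himp_le inf_le_right
  | a13 φ ψ χ =>
      simp only [interp, himp_eq_top_iff, sdiff_sdiff]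
      exact le_rfl
  | a14 φ ψ =>
      simp only [interp, Form.neg, himp_eq_top_iff, le_himp_iff]
      calc (interp v φ \ interp v ψ ⇨ ⊥) ⊓ interp v φ
          ≤ (interp v φ \ interp v ψ ⇨ ⊥) ⊓ (interp v ψ ⊔ interp v φ \ interp v ψ) :=
            inf_le_inf_left _ le_sup_sdiff
        _ = ((interp v φ \ interp v ψ ⇨ ⊥) ⊓ interp v ψ) ⊔
              ((interp v φ \ interp v ψ ⇨ ⊥) ⊓ (interp v φ \ interp v ψ)) := inf_sup_left ..
        _ ≤ interp v ψ := sup_le inf_le_right (himp_inf_le.trans bot_le)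

lemma wprv_sound (v : ℕ → α) {Γ φ} (h : wprv Γ φ) (hΓ : ∀ γ ∈ Γ, interp v γ = ⊤) :
    interp v φ = ⊤ := by
  induction h with
  | ax hax => exact ax_interp v hax
  | el hmem => exact hΓ _ hmem
  | mp _ _ ih1 ih2 =>
      have h1 := ih1 hΓ
      have h2 := ih2 hΓ
      simp only [interp, himp_eq_top_iff] at h1
      rw [eq_top_iff, ← h2]
      exact h1
  | wdn _ ih =>
      have h0 := ih (by simp)
      simp only [interp, Form.neg, Form.wneg] at h0 ⊢
      rw [h0, sdiff_self, himp_eq_top_iff]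
end Aux

theorem wBIL_filters_are_lattice_filters {α : Type*} [BiheytingAlgebra α] (F : Set α) :
    wFilter F ↔ latticeFilter F := by
  constructor
  · intro hF
    have htop : (⊤ : α) ∈ F := by
      have h : wprv ∅ Form.top := wprv.mp (.ax (.a10 (Form.bot.imp .bot))) (.ax (.a9 .bot))
      simpa [interp] using hF ∅ .top (fun _ => ⊤) h (by simp)
    refine ⟨htop, ?_, ?_⟩
    · intro a b ha hab
      set v : ℕ → α := fun n => if n = 0 then a else b with hv
      have h : wprv {Form.var 0, (Form.var 0).imp (Form.var 1)} (Form.var 1) :=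
        wprv.mp (φ := Form.var 0) (ψ := Form.var 1) (.el (by simp)) (.el (by simp))
      have := hF _ _ v h ?_
      · simpa [interp, v] using this
      · rintro γ (rfl | rfl)
        · simpa [interp, v] using ha
        · have : interp v ((Form.var 0).imp (Form.var 1)) = ⊤ := by
            simp only [interp, himp_eq_top_iff]
            simpa [v] using hab
          rw [this]; exact htop
    · intro a b ha hb
      set v : ℕ → α := fun n => if n = 0 then a else b with hv
      set Γ : Set Form := {Form.var 0, Form.var 1} with hΓ
      have dtop : wprv Γ Form.top := wprv.mp (.ax (.a10 (Form.bot.imp .bot))) (.ax (.a9 .bot))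
      have d1 : wprv Γ (Form.top.imp (Form.var 0)) :=
        wprv.mp (.ax (.a1 _ _)) (.el (by simp [hΓ]))
      have d2 : wprv Γ (Form.top.imp (Form.var 1)) :=
        wprv.mp (.ax (.a1 _ _)) (.el (by simp [hΓ]))
      have h : wprv Γ ((Form.var 0).and (Form.var 1)) :=
        wprv.mp (wprv.mp (wprv.mp (.ax (.a8 _ _ _)) d1) d2) dtop
      have := hF _ _ v h ?_
      · simpa [interp, v] using this
      · rintro γ (rfl | rfl)
        · simpa [interp, v] using ha
        · simpa [interp, v] using hb
  · rintro ⟨htop, hup, hinf⟩ Γ φ v h hΓ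
    induction h with
    | ax hax => rw [ax_interp v hax]; exact htop
    | el hmem => exact hΓ _ hmem
    | mp _ _ ih1 ih2 =>
        have h1 := ih1 hΓ
        have h2 := ih2 hΓ
        have := hinf _ _ h1 h2
        refine hup _ _ this ?_
        simp only [interp]
        exact himp_inf_le
    | wdn hd =>
        have h0 := wprv_sound v hd (by simp)
        simp only [Form.neg, Form.wneg, interp]
        rw [h0, sdiff_self, himp_self]
        exact htop
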